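/- For any nonempty event E, there exists some state ω ∈ E such that the maximally evident C-indicating superset of E is equal to the maximally evident C-indicating superset of the singleton {ω}. -/

import Mathlib

/-!
Let `U p` be the union of all `p`-evident `C`-indicating events; it is again one, because
conditional probabilities only grow when the event is enlarged. The maximally evident
`C`-indicating superset of a nonempty `F` is `U p*`, where `p*(F)` is the largest `p` with
`F ⊆ U p`. Since `F ⊆ U p` holds iff every state of `F` lies in `U p`, `p*(E)` is the minimum
of `p*({ω})` over `ω ∈ E`, and a minimizing `ω` has the same maximally evident superset as `E`.
-/

open Finset

variable {Ω : Type*}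

/-- The conditional probability `P_i(E | ω) = μ(E ∩ Π_i(ω)) / μ(Π_i(ω))`,
where `part i ω` is the cell of player `i`'s information partition containing `ω`. -/
noncomputable def condP [Fintype Ω] [DecidableEq Ω] (μ : Ω → ℝ)
    (part : Fin 2 → Ω → Finset Ω) (i : Fin 2) (E : Finset Ω) (ω : Ω) : ℝ :=
  (∑ x ∈ E ∩ part i ω, μ x) / (∑ x ∈ part i ω, μ x)

/-- `E` is `p`-evident: every player `p`-believes `E` at every state of `E`. -/
def pEvident [Fintype Ω] [DecidableEq Ω] (μ : Ω → ℝ)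
    (part : Fin 2 → Ω → Finset Ω) (p : ℝ) (E : Finset Ω) : Prop :=
  ∀ i : Fin 2, ∀ ω ∈ E, p ≤ condP μ part i E ω

/-- `E` is a `p`-evident `C`-indicating event. -/
def pEvidentInd [Fintype Ω] [DecidableEq Ω] (μ : Ω → ℝ)
    (part : Fin 2 → Ω → Finset Ω) (p : ℝ) (C E : Finset Ω) : Prop :=
  pEvident μ part p E ∧ ∀ i : Fin 2, ∀ ω ∈ E, p ≤ condP μ part i C ω

/-- `E` is the largest `p`-evident `C`-indicating event. -/
def isLargestInd [Fintype Ω] [DecidableEq Ω] (μ : Ω → ℝ)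
    (part : Fin 2 → Ω → Finset Ω) (p : ℝ) (C E : Finset Ω) : Prop :=
  pEvidentInd μ part p C E ∧ ∀ F : Finset Ω, pEvidentInd μ part p C F → F ⊆ E

/-- `p` is the `C`-evidence level of `E`: the maximum `q` for which `E` is a
`q`-evident `C`-indicating event. -/
def isEvidenceLevel [Fintype Ω] [DecidableEq Ω] (μ : Ω → ℝ)
    (part : Fin 2 → Ω → Finset Ω) (C E : Finset Ω) (p : ℝ) : Prop :=
  IsGreatest {q : ℝ | pEvidentInd μ part q C E} p

/-- `G` is the maximally evident `C`-indicating superset of `F`. -/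
def isMaxEvidentSup [Fintype Ω] [DecidableEq Ω] (μ : Ω → ℝ)
    (part : Fin 2 → Ω → Finset Ω) (C F G : Finset Ω) : Prop :=
  F ⊆ G ∧ ∃ p : ℝ, isEvidenceLevel μ part C G p ∧ isLargestInd μ part p C G ∧
    ∀ H : Finset Ω, F ⊆ H → ∀ q : ℝ, isEvidenceLevel μ part C H q → q ≤ p

/-- `E` is a maximally evident `C`-indicating event: it is the maximally evident
`C`-indicating superset of some nonempty event. -/
def isMaxEvident [Fintype Ω] [DecidableEq Ω] (μ : Ω → ℝ)
    (part : Fin 2 → Ω → Finset Ω) (C E : Finset Ω) : Prop :=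
  ∃ F : Finset Ω, F.Nonempty ∧ isMaxEvidentSup μ part C F E

/-- `E` is a super-`p`-evident `C`-indicating event. -/
def superEvidentInd [Fintype Ω] [DecidableEq Ω] (μ : Ω → ℝ)
    (part : Fin 2 → Ω → Finset Ω) (p : ℝ) (C E : Finset Ω) : Prop :=
  ∀ i : Fin 2, ∀ ω ∈ E, p < condP μ part i E ω ∧ p < condP μ part i C ω

/-- `E` is the largest super-evident `C`-indicating subset of `F`. -/
def isLargestSuperSub [Fintype Ω] [DecidableEq Ω] (μ : Ω → ℝ)
    (part : Fin 2 → Ω → Finset Ω) (C F E : Finset Ω) : Prop :=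
  E ⊆ F ∧ ∃ p : ℝ, isEvidenceLevel μ part C F p ∧ superEvidentInd μ part p C E ∧
    ∀ G : Finset Ω, G ⊆ F → superEvidentInd μ part p C G → G ⊆ E


section EvidenceLevel

variable [Fintype Ω] [DecidableEq Ω] (μ : Ω → ℝ) (part : Fin 2 → Ω → Finset Ω)

/-- Junk value `0` on `∅`. -/
noncomputable def evidenceLevel (C H : Finset Ω) : ℝ :=
  if hH : H.Nonempty then
    (univ ×ˢ H).inf' (univ_nonempty.product hH)
      fun x => min (condP μ part x.1 H x.2) (condP μ part x.1 C x.2)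
  else 0

noncomputable def largestInd (p : ℝ) (C : Finset Ω) : Finset Ω :=
  open Classical in (univ.filter (pEvidentInd μ part p C)).sup id

noncomputable def maxSupersetLevel (C F : Finset Ω) : ℝ :=
  (univ.filter (F ⊆ ·)).sup' ⟨univ, by simp⟩ (evidenceLevel μ part C)

variable {μ part}

lemma condP_mono (hμ : ∀ ω, 0 ≤ μ ω) (i : Fin 2) {E E' : Finset Ω} (h : E ⊆ E') (ω : Ω) :
    condP μ part i E ω ≤ condP μ part i E' ω :=
  div_le_div_of_nonneg_right
    (sum_le_sum_of_subset_of_nonneg (inter_subset_inter_right h) fun x _ _ => hμ x)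
    (sum_nonneg fun x _ => hμ x)

lemma pEvidentInd_iff_le_evidenceLevel {C H : Finset Ω} (hH : H.Nonempty) (q : ℝ) :
    pEvidentInd μ part q C H ↔ q ≤ evidenceLevel μ part C H := by
  simp only [evidenceLevel, dif_pos hH, le_inf'_iff, le_min_iff, mem_product, mem_univ,
    true_and, Prod.forall, pEvidentInd, pEvident]
  exact ⟨fun h i ω hω => ⟨h.1 i ω hω, h.2 i ω hω⟩,
    fun h => ⟨fun i ω hω => (h i ω hω).1, fun i ω hω => (h i ω hω).2⟩⟩

lemma isEvidenceLevel_iff {C H : Finset Ω} (hH : H.Nonempty) (p : ℝ) :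
    isEvidenceLevel μ part C H p ↔ p = evidenceLevel μ part C H := by
  have hgreatest : isEvidenceLevel μ part C H (evidenceLevel μ part C H) :=
    ⟨(pEvidentInd_iff_le_evidenceLevel hH _).2 le_rfl,
      fun q hq => (pEvidentInd_iff_le_evidenceLevel hH q).1 hq⟩
  exact ⟨fun hp => hp.unique hgreatest, fun hp => hp ▸ hgreatest⟩

lemma mem_largestInd {p : ℝ} {C : Finset Ω} {ω : Ω} :
    ω ∈ largestInd μ part p C ↔ ∃ H, pEvidentInd μ part p C H ∧ ω ∈ H := by
  simp [largestInd, mem_sup]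

lemma subset_largestInd {p : ℝ} {C H : Finset Ω} (h : pEvidentInd μ part p C H) :
    H ⊆ largestInd μ part p C :=
  fun _ hω => mem_largestInd.2 ⟨H, h, hω⟩

lemma pEvidentInd_largestInd (hμ : ∀ ω, 0 ≤ μ ω) (p : ℝ) (C : Finset Ω) :
    pEvidentInd μ part p C (largestInd μ part p C) := by
  constructor <;> intro i ω hω <;> obtain ⟨H, hH, hωH⟩ := mem_largestInd.1 hω
  · exact (hH.1 i ω hωH).trans (condP_mono hμ i (subset_largestInd hH) ω)
  · exact hH.2 i ω hωH

lemma isLargestInd_largestInd (hμ : ∀ ω, 0 ≤ μ ω) (p : ℝ) (C : Finset Ω) :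
    isLargestInd μ part p C (largestInd μ part p C) :=
  ⟨pEvidentInd_largestInd hμ p C, fun _ => subset_largestInd⟩

lemma evidenceLevel_le_maxSupersetLevel {C F H : Finset Ω} (h : F ⊆ H) :
    evidenceLevel μ part C H ≤ maxSupersetLevel μ part C F :=
  le_sup' _ (by simpa using h)

lemma exists_evidenceLevel_eq_maxSupersetLevel (C F : Finset Ω) :
    ∃ H, F ⊆ H ∧ evidenceLevel μ part C H = maxSupersetLevel μ part C F := by
  obtain ⟨H, hH, hmax⟩ := exists_mem_eq_sup' (s := univ.filter (F ⊆ ·)) ⟨univ, by simp⟩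
    (evidenceLevel μ part C)
  exact ⟨H, (mem_filter.1 hH).2, hmax.symm⟩

lemma subset_largestInd_iff_le_maxSupersetLevel (hμ : ∀ ω, 0 ≤ μ ω) {p : ℝ}
    {C F : Finset Ω} (hF : F.Nonempty) :
    F ⊆ largestInd μ part p C ↔ p ≤ maxSupersetLevel μ part C F := by
  constructor
  · intro hFU
    calc p ≤ evidenceLevel μ part C (largestInd μ part p C) :=
          (pEvidentInd_iff_le_evidenceLevel (hF.mono hFU) p).1 (pEvidentInd_largestInd hμ p C)
      _ ≤ maxSupersetLevel μ part C F := evidenceLevel_le_maxSupersetLevel hFU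
  · intro hp
    obtain ⟨H, hFH, hH⟩ := exists_evidenceLevel_eq_maxSupersetLevel (μ := μ) (part := part) C F
    have hHev : pEvidentInd μ part p C H :=
      (pEvidentInd_iff_le_evidenceLevel (hF.mono hFH) p).2 (hH ▸ hp)
    exact hFH.trans (subset_largestInd hHev)

lemma isMaxEvidentSup_largestInd (hμ : ∀ ω, 0 ≤ μ ω) {C F : Finset Ω} (hF : F.Nonempty) :
    isMaxEvidentSup μ part C F (largestInd μ part (maxSupersetLevel μ part C F) C) := by
  set p := maxSupersetLevel μ part C F
  set G := largestInd μ part p C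
  have hFG : F ⊆ G := (subset_largestInd_iff_le_maxSupersetLevel hμ hF).2 le_rfl
  have hG : G.Nonempty := hF.mono hFG
  have hlevel : p = evidenceLevel μ part C G :=
    le_antisymm ((pEvidentInd_iff_le_evidenceLevel hG p).1 (pEvidentInd_largestInd hμ p C))
      (evidenceLevel_le_maxSupersetLevel hFG)
  refine ⟨hFG, p, (isEvidenceLevel_iff hG p).2 hlevel, isLargestInd_largestInd hμ p C, ?_⟩
  intro H hFH q hq
  rw [isEvidenceLevel_iff (hF.mono hFH)] at hq
  exact hq ▸ evidenceLevel_le_maxSupersetLevel hFH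

lemma maxSupersetLevel_eq_inf'_singleton (hμ : ∀ ω, 0 ≤ μ ω) {C E : Finset Ω}
    (hE : E.Nonempty) :
    maxSupersetLevel μ part C E = E.inf' hE fun ω => maxSupersetLevel μ part C {ω} := by
  refine eq_of_forall_le_iff fun p => ?_
  rw [← subset_largestInd_iff_le_maxSupersetLevel hμ hE, le_inf'_iff]
  simp only [← subset_largestInd_iff_le_maxSupersetLevel hμ (singleton_nonempty _),
    singleton_subset_iff]
  rfl

end EvidenceLevel

theorem maxEvidentSup_reduction_general [Fintype Ω] [DecidableEq Ω]
    (μ : Ω → ℝ) (part : Fin 2 → Ω → Finset Ω)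
    (hμpos : ∀ ω : Ω, 0 < μ ω)
    (C E : Finset Ω) (hE : E.Nonempty) :
    ∃ ω ∈ E, ∃ G : Finset Ω,
      isMaxEvidentSup μ part C E G ∧ isMaxEvidentSup μ part C {ω} G := by
  have hμ : ∀ ω, 0 ≤ μ ω := fun ω => (hμpos ω).le
  obtain ⟨ω, hωE, hω⟩ := exists_mem_eq_inf' hE fun ω => maxSupersetLevel μ part C {ω}
  have hlevel : maxSupersetLevel μ part C E = maxSupersetLevel μ part C {ω} :=
    (maxSupersetLevel_eq_inf'_singleton hμ hE).trans hω
  refine ⟨ω, hωE, _, isMaxEvidentSup_largestInd hμ hE, ?_⟩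
  rw [hlevel]
  exact isMaxEvidentSup_largestInd hμ (singleton_nonempty ω)

/-- For any nonempty event `E` there is a state `ω ∈ E` whose singleton has the same
maximally evident `C`-indicating superset as `E`. -/
theorem maxEvidentSup_reduction [Fintype Ω] [DecidableEq Ω] [Nonempty Ω]
    (μ : Ω → ℝ) (part : Fin 2 → Ω → Finset Ω)
    (hμpos : ∀ ω : Ω, 0 < μ ω) (hμsum : ∑ ω : Ω, μ ω = 1)
    (hmem : ∀ (i : Fin 2) (ω : Ω), ω ∈ part i ω)
    (hcell : ∀ (i : Fin 2) (ω ω' : Ω), ω' ∈ part i ω → part i ω' = part i ω)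
    (C E : Finset Ω) (hE : E.Nonempty) :
    ∃ ω ∈ E, ∃ G : Finset Ω,
      isMaxEvidentSup μ part C E G ∧ isMaxEvidentSup μ part C {ω} G :=
  maxEvidentSup_reduction_general μ part hμpos C E hE
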